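/- Let $p, q$ be coprime positive integers, $K$ an algebraically closed field of characteristic zero, and $f(X,Y) = X^q \pm Y^p + g(X,Y)$ where every monomial $X^iY^j$ of $g$ satisfies $pi + qj < pq$ (weighted degree lower than $pq$). Then there exists at most one monic element $u \in K((t))$ of order $-p$ (i.e. $u = t^{-p} + \text{higher order terms}$) satisfying $f(u, t^{-q}) = 0$. -/

import Mathlib

/-!
If `u₁ ≠ u₂`, let `d` be the order of `w = u₁ - u₂`. Subtracting the two equations,
`u₁^q - u₂^q = (∑ u₁^i u₂^(q-1-i)) w` has coefficient `q · w_d ≠ 0` at `t^(d - (q-1)p)`,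
since every `u₁^i u₂^(q-1-i)` is monic of order `-(q-1)p`. Each monomial `X^i Y^j` of `g`
contributes `(u₁^i - u₂^i) t^(-qj)`, of order at least `d - (i-1)p - qj > d - (q-1)p`
by the weighted-degree bound, so it cannot cancel that coefficient.
-/

open MvPolynomial Finset

namespace HahnSeries

variable {Γ R : Type*} [LinearOrder Γ]

theorem le_orderTop_sum {ι : Type*} [AddCommMonoid R] {s : Finset ι} {x : ι → R⟦Γ⟧}
    {a : WithTop Γ} (h : ∀ i ∈ s, a ≤ (x i).orderTop) : a ≤ (∑ i ∈ s, x i).orderTop :=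
  le_orderTop_iff_forall.2 fun j hj => by
    rw [coeff_sum]
    exact sum_eq_zero fun i hi => coeff_eq_zero_of_lt_orderTop (hj.trans_le (h i hi))

variable [AddCommMonoid Γ] [IsOrderedCancelAddMonoid Γ]

theorem coeff_mul_of_le_orderTop [NonUnitalNonAssocSemiring R] {x y : R⟦Γ⟧} {a b : Γ}
    (hx : a ≤ x.orderTop) (hy : b ≤ y.orderTop) :
    (x * y).coeff (a + b) = x.coeff a * y.coeff b := by
  rw [coeff_mul]
  refine sum_eq_single (a, b) (fun ij hij hne => ?_) (fun hab => ?_)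
  · obtain ⟨-, -, hsum⟩ := Finset.mem_antidiagonal.1 hij
    rcases lt_or_ge ij.1 a with h1 | h1
    · rw [coeff_eq_zero_of_lt_orderTop ((WithTop.coe_lt_coe.2 h1).trans_le hx), zero_mul]
    rcases lt_or_ge ij.2 b with h2 | h2
    · rw [coeff_eq_zero_of_lt_orderTop ((WithTop.coe_lt_coe.2 h2).trans_le hy), mul_zero]
    refine absurd (Prod.ext (h1.antisymm' ?_) (h2.antisymm' ?_)) hne
    · exact le_of_add_le_add_right ((add_le_add le_rfl h2).trans hsum.le)
    · exact le_of_add_le_add_left ((add_le_add h1 le_rfl).trans hsum.le)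
  · simp only [Finset.mem_antidiagonal, mem_support, ne_eq, and_true, not_and_or, not_not] at hab
    rcases hab with h | h <;> simp [h]

theorem nsmul_le_orderTop_pow [Semiring R] {x : R⟦Γ⟧} {a : Γ} (hx : a ≤ x.orderTop) (n : ℕ) :
    ↑(n • a) ≤ (x ^ n).orderTop := by
  rw [WithTop.coe_nsmul]
  exact (nsmul_le_nsmul_right hx n).trans orderTop_nsmul_le_orderTop_pow

theorem coeff_pow_of_le_orderTop [Semiring R] {x : R⟦Γ⟧} {a : Γ} (hx : a ≤ x.orderTop) (n : ℕ) :
    (x ^ n).coeff (n • a) = x.coeff a ^ n := by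
  induction n with
  | zero => simp
  | succ n ih =>
    rw [pow_succ, pow_succ, succ_nsmul, coeff_mul_of_le_orderTop (nsmul_le_orderTop_pow hx n) hx,
      ih]

theorem nsmul_le_orderTop_geom_sum₂ [Semiring R] {x y : R⟦Γ⟧} {a : Γ} (hx : a ≤ x.orderTop)
    (hy : a ≤ y.orderTop) (n : ℕ) :
    ↑((n - 1) • a) ≤ (∑ i ∈ range n, x ^ i * y ^ (n - 1 - i)).orderTop := by
  refine le_orderTop_sum fun i hi => ?_
  rw [← Nat.add_sub_of_le (Nat.le_sub_one_of_lt (mem_range.1 hi)), Nat.add_sub_cancel_left,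
    add_nsmul, WithTop.coe_add]
  exact (add_le_add (nsmul_le_orderTop_pow hx i) (nsmul_le_orderTop_pow hy _)).trans
    orderTop_add_le_mul

theorem coeff_geom_sum₂_of_le_orderTop [Semiring R] {x y : R⟦Γ⟧} {a : Γ} (hx : a ≤ x.orderTop)
    (hy : a ≤ y.orderTop) (n : ℕ) :
    (∑ i ∈ range n, x ^ i * y ^ (n - 1 - i)).coeff ((n - 1) • a) =
      ∑ i ∈ range n, x.coeff a ^ i * y.coeff a ^ (n - 1 - i) := by
  rw [coeff_sum]
  refine sum_congr rfl fun i hi => ?_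
  have hsplit : (n - 1) • a = i • a + (n - 1 - i) • a := by
    rw [← add_nsmul, Nat.add_sub_of_le (Nat.le_sub_one_of_lt (mem_range.1 hi))]
  rw [hsplit, coeff_mul_of_le_orderTop (nsmul_le_orderTop_pow hx i) (nsmul_le_orderTop_pow hy _),
    coeff_pow_of_le_orderTop hx, coeff_pow_of_le_orderTop hy]

variable [CommRing R]

theorem le_orderTop_pow_sub_pow {x y : R⟦Γ⟧} {a d : Γ} (hx : a ≤ x.orderTop)
    (hy : a ≤ y.orderTop) (hd : d ≤ (x - y).orderTop) (n : ℕ) :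
    ↑((n - 1) • a + d) ≤ (x ^ n - y ^ n).orderTop := by
  rw [← geom_sum₂_mul, WithTop.coe_add]
  exact (add_le_add (nsmul_le_orderTop_geom_sum₂ hx hy n) hd).trans orderTop_add_le_mul

theorem coeff_pow_sub_pow_of_coeff_eq_one {x y : R⟦Γ⟧} {a d : Γ} (hx : a ≤ x.orderTop)
    (hy : a ≤ y.orderTop) (hx₁ : x.coeff a = 1) (hy₁ : y.coeff a = 1)
    (hd : d ≤ (x - y).orderTop) (n : ℕ) :
    (x ^ n - y ^ n).coeff ((n - 1) • a + d) = n * (x - y).coeff d := by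
  rw [← geom_sum₂_mul, coeff_mul_of_le_orderTop (nsmul_le_orderTop_geom_sum₂ hx hy n) hd,
    coeff_geom_sum₂_of_le_orderTop hx hy, hx₁, hy₁]
  simp

end HahnSeries

namespace LaurentSeries

open HahnSeries

variable {R : Type*} [CommRing R]

theorem aeval_fin_two_eq_sum (x y : LaurentSeries R) (g : MvPolynomial (Fin 2) R) :
    aeval ![x, y] g = ∑ m ∈ g.support, g.coeff m • (x ^ m 0 * y ^ m 1) := by
  rw [aeval_def, eval₂_eq']
  refine sum_congr rfl fun m _ => ?_
  rw [Fin.prod_univ_two, Matrix.cons_val_zero, Matrix.cons_val_one, Matrix.cons_val_zero,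
    HahnSeries.algebraMap_apply', PowerSeries.algebraMap_eq, ofPowerSeries_C, HahnSeries.C_apply,
    single_zero_mul_eq_smul]

theorem lt_orderTop_aeval_sub_aeval {p q : ℕ} {g : MvPolynomial (Fin 2) R}
    (hg : ∀ m ∈ g.support, p * m 0 + q * m 1 < p * q) {x₁ x₂ y : LaurentSeries R}
    (hx₁ : ↑(-(p : ℤ)) ≤ x₁.orderTop) (hx₂ : ↑(-(p : ℤ)) ≤ x₂.orderTop)
    (hy : ↑(-(q : ℤ)) ≤ y.orderTop) {d : ℤ} (hd : ↑d ≤ (x₁ - x₂).orderTop) :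
    ↑(d + p - p * q) < (aeval ![x₁, y] g - aeval ![x₂, y] g).orderTop := by
  refine (WithTop.coe_lt_coe.2 (lt_add_one _)).trans_le ?_
  rw [aeval_fin_two_eq_sum, aeval_fin_two_eq_sum, ← sum_sub_distrib]
  refine le_orderTop_sum fun m hm => ?_
  rw [← smul_sub, ← sub_mul]
  refine le_trans ?_ (orderTop_le_orderTop_smul _ _)
  rcases Nat.eq_zero_or_pos (m 0) with h0 | h0
  · simp [h0]
  have hwt : (p : ℤ) * m 0 + q * m 1 < p * q := by exact_mod_cast hg m hm
  calc (↑(d + p - p * q + 1) : WithTop ℤ)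
      ≤ ↑((m 0 - 1) • (-(p : ℤ)) + d + m 1 • (-(q : ℤ))) := by
        rw [WithTop.coe_le_coe, nsmul_eq_mul, nsmul_eq_mul, Nat.cast_sub h0]
        push_cast
        linarith
    _ ≤ (x₁ ^ m 0 - x₂ ^ m 0).orderTop + (y ^ m 1).orderTop := by
        rw [WithTop.coe_add]
        exact add_le_add (le_orderTop_pow_sub_pow hx₁ hx₂ hd _) (nsmul_le_orderTop_pow hy _)
    _ ≤ _ := orderTop_add_le_mul

end LaurentSeries

theorem at_most_one_monic_solution_general (K : Type*) [Field K] [CharZero K]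
    (p q : ℕ) (hq : 0 < q)
    (ε : K)
    (g : MvPolynomial (Fin 2) K)
    (hg : ∀ m ∈ g.support, p * m 0 + q * m 1 < p * q)
    (u₁ u₂ : LaurentSeries K)
    (h₁monic : u₁.coeff (-(p : ℤ)) = 1) (h₁ord : ∀ j : ℤ, j < -(p : ℤ) → u₁.coeff j = 0)
    (h₂monic : u₂.coeff (-(p : ℤ)) = 1) (h₂ord : ∀ j : ℤ, j < -(p : ℤ) → u₂.coeff j = 0)
    (h₁ : aeval ![u₁, (HahnSeries.single (-(q : ℤ)) (1 : K) : LaurentSeries K)]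
        (X 0 ^ q + C ε * X 1 ^ p + g) = 0)
    (h₂ : aeval ![u₂, (HahnSeries.single (-(q : ℤ)) (1 : K) : LaurentSeries K)]
        (X 0 ^ q + C ε * X 1 ^ p + g) = 0) :
    u₁ = u₂ := by
  set Y : LaurentSeries K := HahnSeries.single (-(q : ℤ)) 1
  have hb₁ : ↑(-(p : ℤ)) ≤ u₁.orderTop :=
    HahnSeries.le_orderTop_iff_forall.2 fun j hj => h₁ord j (WithTop.coe_lt_coe.1 hj)
  have hb₂ : ↑(-(p : ℤ)) ≤ u₂.orderTop :=
    HahnSeries.le_orderTop_iff_forall.2 fun j hj => h₂ord j (WithTop.coe_lt_coe.1 hj)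
  by_contra hne
  set d := (u₁ - u₂).order
  have hd : ↑d ≤ (u₁ - u₂).orderTop :=
    (HahnSeries.order_eq_orderTop_of_ne_zero (sub_ne_zero.2 hne)).le
  have hdiff : u₁ ^ q - u₂ ^ q + (aeval ![u₁, Y] g - aeval ![u₂, Y] g) = 0 := by
    simp only [map_add, map_mul, map_pow, aeval_X, aeval_C, Matrix.cons_val_zero,
      Matrix.cons_val_one] at h₁ h₂
    linear_combination h₁ - h₂
  have hN : (q - 1) • (-(p : ℤ)) + d = d + p - p * q := by
    rw [nsmul_eq_mul, Nat.cast_sub hq]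
    ring
  have hleading : (u₁ ^ q - u₂ ^ q).coeff (d + p - p * q) = q * (u₁ - u₂).coeff d := by
    rw [← hN]
    exact HahnSeries.coeff_pow_sub_pow_of_coeff_eq_one hb₁ hb₂ h₁monic h₂monic hd q
  have hlower : (aeval ![u₁, Y] g - aeval ![u₂, Y] g).coeff (d + p - p * q) = 0 :=
    HahnSeries.coeff_eq_zero_of_lt_orderTop
      (LaurentSeries.lt_orderTop_aeval_sub_aeval hg hb₁ hb₂ HahnSeries.orderTop_single_le hd)
  have hcoeff := congrArg (HahnSeries.coeff · (d + p - p * q : ℤ)) hdiff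
  rw [HahnSeries.coeff_add, hleading, hlower, add_zero, HahnSeries.coeff_zero, mul_eq_zero,
    Nat.cast_eq_zero] at hcoeff
  exact hcoeff.elim hq.ne' fun h => hne (sub_eq_zero.1 (HahnSeries.coeff_order_eq_zero.1 h))

/-- Uniqueness of the monic Laurent-series solution of a Burchnall–Chaundy equation:
if `p, q` are coprime positive integers, `f(X,Y) = X^q ± Y^p + g(X,Y)` with every
monomial of `g` of weighted degree `< pq` (weights `p` for `X`, `q` for `Y`), then
there is at most one monic `u ∈ K((t))` of order `-p` with `f(u, t^{-q}) = 0`. -/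
theorem at_most_one_monic_solution (K : Type*) [Field K] [IsAlgClosed K] [CharZero K]
    (p q : ℕ) (hp : 0 < p) (hq : 0 < q) (hpq : Nat.Coprime p q)
    (ε : K) (hε : ε = 1 ∨ ε = -1)
    (g : MvPolynomial (Fin 2) K)
    (hg : ∀ m ∈ g.support, p * m 0 + q * m 1 < p * q)
    (u₁ u₂ : LaurentSeries K)
    (h₁monic : u₁.coeff (-(p : ℤ)) = 1) (h₁ord : ∀ j : ℤ, j < -(p : ℤ) → u₁.coeff j = 0)
    (h₂monic : u₂.coeff (-(p : ℤ)) = 1) (h₂ord : ∀ j : ℤ, j < -(p : ℤ) → u₂.coeff j = 0)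
    (h₁ : aeval ![u₁, (HahnSeries.single (-(q : ℤ)) (1 : K) : LaurentSeries K)]
        (X 0 ^ q + C ε * X 1 ^ p + g) = 0)
    (h₂ : aeval ![u₂, (HahnSeries.single (-(q : ℤ)) (1 : K) : LaurentSeries K)]
        (X 0 ^ q + C ε * X 1 ^ p + g) = 0) :
    u₁ = u₂ :=
  at_most_one_monic_solution_general K p q hq ε g hg u₁ u₂ h₁monic h₁ord h₂monic h₂ord h₁ h₂
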